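/- arXiv:1109.4020 — 8 statements merged into one kernel-verified Lean document; each statement's English description precedes it below -/
import Mathlib

section
/- For a nonnegative bounded self-adjoint operator S on a Hilbert space H and a closed subspace K, the Kreĭn shorted operator S_K defined by (S_K f, f) = inf_{φ ∈ K^⊥} (S(f+φ), f+φ) is the maximum of the set of nonnegative operators Z with Z ≤ S and ran Z ⊆ K. -/
open ContinuousLinearMap

variable {H : Type*} [NormedAddCommGroup H] [InnerProductSpace ℂ H] [CompleteSpace H]

/-- `W` is the Kreĭn shorted operator of `S` with respect to the closed subspace `K`:
it is self-adjoint and its quadratic form is given by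
`(W f, f) = inf_{φ ∈ K^⊥} (S (f + φ), f + φ)`. -/
def IsShortedOp (S W : H →L[ℂ] H) (K : Submodule ℂ H) : Prop :=
  IsSelfAdjoint W ∧
    ∀ f : H, (inner ℂ (W f) f : ℂ).re = ⨅ φ : Kᗮ, (inner ℂ (S (f + φ)) (f + φ) : ℂ).re

/-- For a nonnegative bounded self-adjoint operator `S` and a closed
subspace `K`, the shorted operator `S_K` (defined by the infimum formula) is the
maximum of the set of nonnegative operators `Z` with `Z ≤ S` and `ran Z ⊆ K`. -/
theorem shorted_is_max (S : H →L[ℂ] H) (hS : S.IsPositive)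
    (K : Submodule ℂ H) (hK : IsClosed (K : Set H))
    (W : H →L[ℂ] H) (hW : IsShortedOp S W K) :
    W.IsPositive ∧ (S - W).IsPositive ∧ LinearMap.range (W : H →ₗ[ℂ] H) ≤ K ∧
      ∀ Z : H →L[ℂ] H, Z.IsPositive → (S - Z).IsPositive →
        LinearMap.range (Z : H →ₗ[ℂ] H) ≤ K → (W - Z).IsPositive := by
  obtain ⟨hWsa, hWf⟩ := hW
  have hSnn : ∀ x : H, 0 ≤ (inner ℂ (S x) x : ℂ).re := by
    intro x
    have := hS.2 x
    simpa [ContinuousLinearMap.reApplyInnerSelf_apply] using this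
  have hbdd : ∀ f : H,
      BddBelow (Set.range fun φ : Kᗮ => (inner ℂ (S (f + φ)) (f + φ) : ℂ).re) := by
    intro f
    exact ⟨0, by rintro _ ⟨φ, rfl⟩; exact hSnn _⟩
  have hW0 : ∀ f : H, 0 ≤ (inner ℂ (W f) f : ℂ).re := by
    intro f; rw [hWf]; exact le_ciInf fun φ => hSnn _
  have hWle : ∀ f : H, (inner ℂ (W f) f : ℂ).re ≤ (inner ℂ (S f) f : ℂ).re := by
    intro f; rw [hWf]
    have := ciInf_le (hbdd f) (0 : Kᗮ)
    simpa using this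
  have hWpos : W.IsPositive := by
    refine ⟨hWsa.isSymmetric, fun x => ?_⟩
    simpa [ContinuousLinearMap.reApplyInnerSelf_apply] using hW0 x
  have hsym : ∀ a b : H, (inner ℂ (W a) b : ℂ) = inner ℂ a (W b) := fun a b =>
    hWsa.isSymmetric a b
  -- quadratic form vanishes on Kᗮ
  have hqperp : ∀ ψ : H, ψ ∈ Kᗮ → (inner ℂ (W ψ) ψ : ℂ).re = 0 := by
    intro ψ hψ
    refine le_antisymm ?_ (hW0 ψ)
    rw [hWf]
    have := ciInf_le (hbdd ψ) (⟨-ψ, neg_mem hψ⟩ : Kᗮ)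
    simpa using this
  -- W vanishes on Kᗮ
  have hWperp : ∀ ψ : H, ψ ∈ Kᗮ → W ψ = 0 := by
    intro ψ hψ
    set y := W ψ with hy
    have key : ∀ t : ℝ,
        0 ≤ (inner ℂ (W y) y : ℂ).re * (t * t) + (2 * ‖y‖ ^ 2) * t + 0 := by
      intro t
      have h0 := hW0 (ψ + (t : ℂ) • y)
      have h2 : (inner ℂ (W y) ψ : ℂ) = inner ℂ y y := by
        rw [hsym y ψ, ← hy]
      have e1 : (inner ℂ (W (ψ + (t : ℂ) • y)) (ψ + (t : ℂ) • y) : ℂ)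
          = inner ℂ (W ψ) ψ + 2 * (t : ℂ) * (inner ℂ y y)
            + (t : ℂ) * (t : ℂ) * (inner ℂ (W y) y) := by
        rw [map_add, W.map_smul]
        rw [inner_add_left, inner_add_right, inner_add_right,
          inner_smul_left, inner_smul_right, inner_smul_left, inner_smul_right]
        rw [h2, ← hy]
        simp [Complex.conj_ofReal]
        ring
      rw [e1] at h0
      have hyy : (inner ℂ y y : ℂ).re = ‖y‖ ^ 2 := by
        simpa using inner_self_eq_norm_sq (𝕜 := ℂ) (E := H) y
      have hqz : (inner ℂ (W ψ) ψ : ℂ).re = 0 := hqperp ψ hψ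
      simp only [Complex.add_re, Complex.mul_re, Complex.ofReal_re, Complex.ofReal_im,
        Complex.mul_im, Complex.re_ofNat, Complex.im_ofNat] at h0
      rw [hqz, hyy] at h0
      ring_nf at h0 ⊢
      linarith
    have hd := discrim_le_zero key
    have hb : (2 * ‖y‖ ^ 2) ^ 2 ≤ 0 := by
      simpa [discrim] using hd
    have ha : ‖y‖ ^ 2 * ‖y‖ ^ 2 = 0 := by nlinarith [sq_nonneg (‖y‖ ^ 2)]
    have hns : ‖y‖ ^ 2 = 0 := mul_self_eq_zero.mp ha
    have hny : ‖y‖ = 0 := by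
      have := pow_eq_zero_iff (n := 2) (by norm_num) |>.mp hns
      exact this
    simpa [hy] using norm_eq_zero.mp hny
  -- range condition
  have hrange : LinearMap.range (W : H →ₗ[ℂ] H) ≤ K := by
    rintro _ ⟨f, rfl⟩
    haveI : CompleteSpace K := hK.completeSpace_coe
    rw [← Submodule.orthogonal_orthogonal K]
    rw [Submodule.mem_orthogonal]
    intro ψ hψ
    rw [ContinuousLinearMap.coe_coe, ← hsym ψ f, hWperp ψ hψ, inner_zero_left]
  -- S - W positive
  have hSW : (S - W).IsPositive := by
    refine ⟨hS.1.sub hWsa.isSymmetric, fun x => ?_⟩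
    have := hWle x
    simp only [ContinuousLinearMap.reApplyInnerSelf_apply, ContinuousLinearMap.sub_apply,
      inner_sub_left, RCLike.re_to_complex, Complex.sub_re]
    linarith
  refine ⟨hWpos, hSW, hrange, ?_⟩
  intro Z hZ hSZ hZr
  refine ⟨hWsa.isSymmetric.sub hZ.1, fun x => ?_⟩
  have hZsym : ∀ a b : H, (inner ℂ (Z a) b : ℂ) = inner ℂ a (Z b) := fun a b =>
    hZ.1 a b
  have horth : ∀ (v : H) (φ : Kᗮ), (inner ℂ (Z v) (φ : H) : ℂ) = 0 := by
    intro v φ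
    have hz : Z v ∈ K := hZr ⟨v, rfl⟩
    exact (Submodule.mem_orthogonal K (φ : H)).1 φ.2 (Z v) hz
  have key : ∀ φ : Kᗮ,
      (inner ℂ (Z x) x : ℂ).re ≤ (inner ℂ (S (x + φ)) (x + φ) : ℂ).re := by
    intro φ
    have h2 : (inner ℂ (Z (φ : H)) x : ℂ) = 0 := by
      rw [hZsym, ← inner_conj_symm, horth x φ, map_zero]
    have e2 : (inner ℂ (Z (x + φ)) (x + φ) : ℂ) = inner ℂ (Z x) x := by
      rw [map_add, inner_add_left, inner_add_right, inner_add_right,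
        horth x φ, horth (φ : H) φ, h2]
      ring
    have hpos := hSZ.2 (x + φ)
    simp only [ContinuousLinearMap.reApplyInnerSelf_apply, ContinuousLinearMap.sub_apply,
      inner_sub_left, RCLike.re_to_complex, Complex.sub_re] at hpos
    rw [e2] at hpos
    linarith
  have hZW : (inner ℂ (Z x) x : ℂ).re ≤ (inner ℂ (W x) x : ℂ).re := by
    rw [hWf]; exact le_ciInf key
  simp only [ContinuousLinearMap.reApplyInnerSelf_apply, ContinuousLinearMap.sub_apply,
    inner_sub_left, RCLike.re_to_complex, Complex.sub_re]
  linarith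
end

section
/- If S₁ and S₂ are nonnegative bounded self-adjoint operators on a Hilbert space H and K is a closed subspace, then the shorted operator of the sum dominates the sum of the shorted operators: (S₁ + S₂)_K ≥ (S₁)_K + (S₂)_K. -/
/- The infimum defining a shorted operator is additive only up to an inequality: minimizing
`⟪S₁ (f + φ), f + φ⟫` and `⟪S₂ (f + φ), f + φ⟫` separately can only do better than minimizing
their sum with one common `φ ∈ Kᗮ`. The quadratic forms of positive operators are bounded below
by `0`, so the real infima involved are genuine infima. -/

open ContinuousLinearMap

variable {H : Type*} [NormedAddCommGroup H] [InnerProductSpace ℂ H] [CompleteSpace H]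

namespace ContinuousLinearMap

variable {𝕜 E : Type*} [RCLike 𝕜] [NormedAddCommGroup E] [InnerProductSpace 𝕜 E]

theorem reApplyInnerSelf_add (T S : E →L[𝕜] E) (x : E) :
    (T + S).reApplyInnerSelf x = T.reApplyInnerSelf x + S.reApplyInnerSelf x := by
  simp only [reApplyInnerSelf_apply, add_apply, inner_add_left, map_add]

theorem reApplyInnerSelf_sub (T S : E →L[𝕜] E) (x : E) :
    (T - S).reApplyInnerSelf x = T.reApplyInnerSelf x - S.reApplyInnerSelf x := by
  simp only [reApplyInnerSelf_apply, sub_apply, inner_sub_left, map_sub]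

theorem IsPositive.bddBelow_range_reApplyInnerSelf {T : E →L[𝕜] E} (hT : T.IsPositive)
    {ι : Sort*} (v : ι → E) : BddBelow (Set.range fun i ↦ T.reApplyInnerSelf (v i)) :=
  ⟨0, by rintro _ ⟨i, rfl⟩; exact hT.2 (v i)⟩

end ContinuousLinearMap

namespace IsShortedOp

theorem reApplyInnerSelf_eq {S W : H →L[ℂ] H} {K : Submodule ℂ H} (h : IsShortedOp S W K)
    (f : H) : W.reApplyInnerSelf f = ⨅ φ : Kᗮ, S.reApplyInnerSelf (f + φ) :=
  h.2 f

theorem add_le {S₁ S₂ W₁ W₂ W : H →L[ℂ] H} {K : Submodule ℂ H}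
    (hS₁ : S₁.IsPositive) (hS₂ : S₂.IsPositive) (hW₁ : IsShortedOp S₁ W₁ K)
    (hW₂ : IsShortedOp S₂ W₂ K) (hW : IsShortedOp (S₁ + S₂) W K) : W₁ + W₂ ≤ W := by
  rw [le_def, isPositive_def']
  refine ⟨hW.1.sub (hW₁.1.add hW₂.1), fun f ↦ ?_⟩
  rw [reApplyInnerSelf_sub, reApplyInnerSelf_add, sub_nonneg, hW₁.reApplyInnerSelf_eq,
    hW₂.reApplyInnerSelf_eq, hW.reApplyInnerSelf_eq]
  simp only [reApplyInnerSelf_add]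
  exact ciInf_add_ciInf_le_ciInf_add (hS₁.bddBelow_range_reApplyInnerSelf _)
    (hS₂.bddBelow_range_reApplyInnerSelf _)

end IsShortedOp

theorem shorted_superadditive_general (S₁ S₂ : H →L[ℂ] H)
    (hS₁ : S₁.IsPositive) (hS₂ : S₂.IsPositive)
    (K : Submodule ℂ H)
    (W₁ W₂ W : H →L[ℂ] H)
    (hW₁ : IsShortedOp S₁ W₁ K) (hW₂ : IsShortedOp S₂ W₂ K)
    (hW : IsShortedOp (S₁ + S₂) W K) :
    (W - (W₁ + W₂)).IsPositive :=
  (le_def _ _).1 (hW₁.add_le hS₁ hS₂ hW₂ hW)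

/-- The shorted operator of a sum dominates the sum of the shorted
operators: `(S₁ + S₂)_K ≥ (S₁)_K + (S₂)_K`. -/
theorem shorted_superadditive (S₁ S₂ : H →L[ℂ] H)
    (hS₁ : S₁.IsPositive) (hS₂ : S₂.IsPositive)
    (K : Submodule ℂ H) (hK : IsClosed (K : Set H))
    (W₁ W₂ W : H →L[ℂ] H)
    (hW₁ : IsShortedOp S₁ W₁ K) (hW₂ : IsShortedOp S₂ W₂ K)
    (hW : IsShortedOp (S₁ + S₂) W K) :
    (W - (W₁ + W₂)).IsPositive :=
  shorted_superadditive_general S₁ S₂ hS₁ hS₂ K W₁ W₂ W hW₁ hW₂ hW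
end

section
/- Let S ≥ 0 be a bounded operator on H, K a closed subspace, and Ω = {f ∈ closure(ran S) : S^{1/2} f ∈ K}. Then the shorted operator satisfies S_K = S^{1/2} P_Ω S^{1/2}, where P_Ω is the orthogonal projection onto Ω. -/
/-!
Write `S = R²` with `R = S^{1/2}`, so that `re ⟪S g, g⟫ = ‖R g‖²`. The infimum defining `S_K f`
is then the squared distance from `R f` to `R K^⊥`, i.e. `‖R f - P_N R f‖²` with
`N = closure (R K^⊥)`. As `R` is self-adjoint, `R⁻¹ K = Nᗮ`, so `Ω = closure (ran S) ⊖ N`; since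
`N ⊆ closure (ran S) ∋ R f`, this gives `R f - P_N R f = P_Ω R f`, and
`‖P_Ω R f‖² = re ⟪R P_Ω R f, f⟫`. Two self-adjoint operators with the same quadratic form coincide.
-/

open ContinuousLinearMap

variable {H : Type*} [NormedAddCommGroup H] [InnerProductSpace ℂ H] [CompleteSpace H]

open RCLike
open scoped InnerProductSpace

section
variable {𝕜 E F : Type*} [RCLike 𝕜] [NormedAddCommGroup E] [InnerProductSpace 𝕜 E]
  [NormedAddCommGroup F] [InnerProductSpace 𝕜 F]

theorem Submodule.iInf_norm_add_apply_sq_eq (T : E →ₗ[𝕜] F) (U : Submodule 𝕜 E)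
    [(U.map T).topologicalClosure.HasOrthogonalProjection] (x : F) :
    ⨅ u : U, ‖x + T u‖ ^ 2 =
      ‖x - (U.map T).topologicalClosure.starProjection x‖ ^ 2 := by
  set N := (U.map T).topologicalClosure
  refine (isGLB_of_mem_closure ?_ ?_).ciInf_eq
  · rintro _ ⟨u, rfl⟩
    have hperp : ⟪x - N.starProjection x, N.starProjection x + T u⟫_𝕜 = 0 :=
      N.starProjection_inner_eq_zero x _ <| N.add_mem (N.starProjection_apply_mem x)
        ((U.map T).le_topologicalClosure (Submodule.mem_map_of_mem u.2))
    show _ ≤ ‖x + T u‖ ^ 2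
    rw [show x + T u = (x - N.starProjection x) + (N.starProjection x + T u) by abel, sq, sq,
      norm_add_sq_eq_norm_sq_add_norm_sq_of_inner_eq_zero _ _ hperp]
    exact le_add_of_nonneg_right (mul_self_nonneg _)
  · have hmem : -N.starProjection x ∈ closure (T '' U) := by
      rw [← Submodule.map_coe, ← Submodule.topologicalClosure_coe]
      exact N.neg_mem (N.starProjection_apply_mem x)
    have hmaps : Set.MapsTo (fun y => ‖x + y‖ ^ 2) (T '' U)
        (Set.range fun u : U => ‖x + T u‖ ^ 2) := by
      rintro _ ⟨u, hu, rfl⟩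
      exact ⟨⟨u, hu⟩, rfl⟩
    simpa [← sub_eq_add_neg] using map_mem_closure (by fun_prop) hmem hmaps

theorem Submodule.starProjection_apply_eq_sub_starProjection {M N Ω : Submodule 𝕜 E}
    [N.HasOrthogonalProjection] [Ω.HasOrthogonalProjection] (hΩ : Ω = M ⊓ Nᗮ) (hNM : N ≤ M)
    {x : E} (hx : x ∈ M) : Ω.starProjection x = x - N.starProjection x := by
  refine eq_starProjection_of_mem_orthogonal ?_ ?_
  · rw [hΩ]
    exact ⟨M.sub_mem hx (hNM (N.starProjection_apply_mem x)),
      N.sub_starProjection_mem_orthogonal x⟩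
  · rw [sub_sub_cancel]
    exact Submodule.orthogonal_le (hΩ ▸ inf_le_right) <|
      N.le_orthogonal_orthogonal (N.starProjection_apply_mem x)

theorem Submodule.eq_starProjection_of_eqOn {Ω : Submodule 𝕜 E} [Ω.HasOrthogonalProjection]
    {P : E →L[𝕜] E} (h₁ : ∀ x ∈ Ω, P x = x) (h₂ : ∀ x ∈ Ωᗮ, P x = 0) :
    P = Ω.starProjection := by
  ext x
  conv_lhs => rw [← Ω.starProjection_add_starProjection_orthogonal x]
  rw [map_add, h₁ _ (Ω.starProjection_apply_mem x), h₂ _ (Ωᗮ.starProjection_apply_mem x),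
    add_zero]

variable [CompleteSpace E] [CompleteSpace F]

theorem IsSelfAdjoint.ext_of_re_inner_apply_self {A B : E →L[𝕜] E} (hA : IsSelfAdjoint A)
    (hB : IsSelfAdjoint B) (h : ∀ x, re ⟪A x, x⟫_𝕜 = re ⟪B x, x⟫_𝕜) : A = B := by
  have hAB := (hA.sub hB).isSymmetric
  rw [← sub_eq_zero, ← ContinuousLinearMap.coe_inj, ContinuousLinearMap.toLinearMap_zero,
    ← hAB.inner_map_self_eq_zero]
  intro x
  rw [← hAB.coe_re_inner_apply_self]
  simp [inner_sub_left, h x]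

theorem Submodule.orthogonal_map_eq_comap_adjoint (T : E →L[𝕜] F) (U : Submodule 𝕜 E) :
    (U.map (T : E →ₗ[𝕜] F))ᗮ = Uᗮ.comap (adjoint T : F →ₗ[𝕜] E) := by
  ext y
  simp [Submodule.mem_orthogonal, adjoint_inner_right]

theorem IsSelfAdjoint.range_le_closure_range_comp_self {R : E →L[𝕜] E} (hR : IsSelfAdjoint R) :
    R.range ≤ (R ∘L R).range.topologicalClosure := by
  have key := orthogonal_ker (adjoint R ∘L R)
  rw [ker_adjoint_comp_self, adjoint_comp, adjoint_adjoint, hR.adjoint_eq] at key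
  rw [← key, orthogonal_ker, hR.adjoint_eq]
  exact Submodule.le_topologicalClosure _

end

theorem shorted_eq_sqrt_proj_sqrt_general (S R : H →L[ℂ] H)
    (hR : R.IsPositive) (hR2 : R ∘L R = S)
    (K : Submodule ℂ H) (hK : IsClosed (K : Set H))
    (Ω : Submodule ℂ H)
    (hΩ : Ω = (LinearMap.range (S : H →ₗ[ℂ] H)).topologicalClosure ⊓
      Submodule.comap (R : H →ₗ[ℂ] H) K)
    (P : H →L[ℂ] H) (hP₁ : ∀ x ∈ Ω, P x = x) (hP₂ : ∀ x ∈ Ωᗮ, P x = 0)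
    (W : H →L[ℂ] H) (hW : IsShortedOp S W K) :
    W = R ∘L P ∘L R := by
  subst hR2
  have hR' := hR.isSelfAdjoint
  have : CompleteSpace K := hK.completeSpace_coe
  set M := (R ∘L R).range.topologicalClosure
  set N := (Kᗮ.map (R : H →ₗ[ℂ] H)).topologicalClosure
  have hΩMN : Ω = M ⊓ Nᗮ := by
    rw [hΩ, Submodule.orthogonal_closure, Submodule.orthogonal_map_eq_comap_adjoint,
      hR'.adjoint_eq, K.orthogonal_orthogonal]
  have hΩclosed : IsClosed (Ω : Set H) := by
    rw [hΩMN]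
    exact (Submodule.isClosed_topologicalClosure _).inter (Submodule.isClosed_orthogonal _)
  have : CompleteSpace Ω := hΩclosed.completeSpace_coe
  obtain rfl : P = Ω.starProjection := Submodule.eq_starProjection_of_eqOn hP₁ hP₂
  have hRM : ∀ x, R x ∈ M := fun x => hR'.range_le_closure_range_comp_self ⟨x, rfl⟩
  have hNM : N ≤ M := Submodule.topologicalClosure_minimal _
    (by rintro _ ⟨φ, -, rfl⟩; exact hRM φ) (Submodule.isClosed_topologicalClosure _)
  have hSR : ∀ g, (⟪(R ∘L R) g, g⟫_ℂ).re = ‖R g‖ ^ 2 := fun g => by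
    rw [R.apply_norm_sq_eq_inner_adjoint_left, hR'.adjoint_eq]
    rfl
  have hRPR : IsSelfAdjoint (R ∘L Ω.starProjection ∘L R) := by
    have := (isSelfAdjoint_starProjection Ω).conj_adjoint R
    rwa [hR'.adjoint_eq] at this
  refine hW.1.ext_of_re_inner_apply_self hRPR fun f => ?_
  calc (⟪W f, f⟫_ℂ).re
      _ = ⨅ φ : Kᗮ, ‖R f + R φ‖ ^ 2 := by
        rw [hW.2 f]
        exact iInf_congr fun φ => by rw [hSR, map_add]
      _ = ‖R f - N.starProjection (R f)‖ ^ 2 :=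
        Kᗮ.iInf_norm_add_apply_sq_eq (R : H →ₗ[ℂ] H) (R f)
      _ = ‖Ω.starProjection (R f)‖ ^ 2 := by
        rw [Submodule.starProjection_apply_eq_sub_starProjection hΩMN hNM (hRM f)]
      _ = re ⟪(R ∘L Ω.starProjection ∘L R) f, f⟫_ℂ := by
        rw [comp_apply, comp_apply, ← adjoint_inner_right, hR'.adjoint_eq,
          Submodule.re_inner_starProjection_eq_normSq]
        rfl

/-- Let `S ≥ 0`, `R = S^{1/2}` its positive square root, `K` a closed
subspace and `Ω = {f ∈ closure(ran S) : S^{1/2} f ∈ K}`. Then the shorted operator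
satisfies `S_K = S^{1/2} P_Ω S^{1/2}`, where `P_Ω` is the orthogonal projection onto
`Ω` (characterized by `P = id` on `Ω` and `P = 0` on `Ωᗮ`). -/
theorem shorted_eq_sqrt_proj_sqrt (S R : H →L[ℂ] H)
    (hS : S.IsPositive) (hR : R.IsPositive) (hR2 : R ∘L R = S)
    (K : Submodule ℂ H) (hK : IsClosed (K : Set H))
    (Ω : Submodule ℂ H)
    (hΩ : Ω = (LinearMap.range (S : H →ₗ[ℂ] H)).topologicalClosure ⊓
      Submodule.comap (R : H →ₗ[ℂ] H) K)
    (P : H →L[ℂ] H) (hP₁ : ∀ x ∈ Ω, P x = x) (hP₂ : ∀ x ∈ Ωᗮ, P x = 0)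
    (W : H →L[ℂ] H) (hW : IsShortedOp S W K) :
    W = R ∘L P ∘L R :=
  shorted_eq_sqrt_proj_sqrt_general S R hR hR2 K hK Ω hΩ P hP₁ hP₂ W hW
end

section
/- For a nonnegative bounded operator S on H and a closed subspace K, the shorted operator S_K vanishes if and only if ran(S^{1/2}) ∩ K = {0}. -/
/-!
With `S = R²`, the quadratic form of the shorted operator at `f` is
`inf_{φ ∈ Kᗮ} ‖R f + R φ‖²`, which vanishes exactly when `R f` lies in the closure `M` of
`R(Kᗮ)`. Hence `S_K = 0` iff `ran R ⊆ M`, i.e. iff `Mᗮ ⊆ (ran R)ᗮ = ker R`. Since `R` is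
self-adjoint and `K` is closed, `Mᗮ = R⁻¹(K)`, so this says that `R` kills every vector it maps
into `K`, i.e. `ran R ∩ K = 0`.
-/

open ContinuousLinearMap

variable {H : Type*} [NormedAddCommGroup H] [InnerProductSpace ℂ H] [CompleteSpace H]

open scoped InnerProduct InnerProductSpace

theorem Real.iInf_eq_zero_iff_forall_exists_lt {ι : Sort*} [Nonempty ι] {a : ι → ℝ}
    (ha : ∀ i, 0 ≤ a i) : ⨅ i, a i = 0 ↔ ∀ ε > 0, ∃ i, a i < ε := by
  have hbdd : BddBelow (Set.range a) := ⟨0, Set.forall_mem_range.2 ha⟩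
  refine ⟨fun h ε hε => (ciInf_lt_iff hbdd).1 (h ▸ hε), fun h => le_antisymm ?_ (le_ciInf ha)⟩
  refine le_of_forall_pos_le_add fun ε hε => ?_
  obtain ⟨i, hi⟩ := h ε hε
  simpa using (ciInf_le hbdd i).trans hi.le

theorem LinearMap.range_inf_eq_bot_iff_comap_le_ker {R M N : Type*} [Ring R] [AddCommGroup M]
    [AddCommGroup N] [Module R M] [Module R N] (f : M →ₗ[R] N) (p : Submodule R N) :
    LinearMap.range f ⊓ p = ⊥ ↔ p.comap f ≤ LinearMap.ker f := by
  rw [← Submodule.map_comap_eq, LinearMap.le_ker_iff_map]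

namespace ContinuousLinearMap

theorem iInf_norm_sq_apply_add_eq_zero_iff {𝕜 E F : Type*} [RCLike 𝕜]
    [SeminormedAddCommGroup E] [SeminormedAddCommGroup F] [NormedSpace 𝕜 E] [NormedSpace 𝕜 F]
    (T : E →L[𝕜] F) (V : Submodule 𝕜 E) (f : E) :
    ⨅ v : V, ‖T (f + v)‖ ^ 2 = 0 ↔ T f ∈ (V.map (T : E →ₗ[𝕜] F)).topologicalClosure := by
  rw [Real.iInf_eq_zero_iff_forall_exists_lt fun _ => by positivity, ← SetLike.mem_coe,
    Submodule.topologicalClosure_coe, Metric.mem_closure_iff]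
  have hdist : ∀ v : E, dist (T f) (T (-v)) = ‖T (f + v)‖ := by
    intro v
    rw [dist_eq_norm, map_neg, sub_neg_eq_add, map_add]
  constructor
  · intro h ε hε
    obtain ⟨v, hv⟩ := h (ε ^ 2) (by positivity)
    refine ⟨T (-v), ⟨-v, neg_mem v.2, rfl⟩, ?_⟩
    rw [hdist]
    exact lt_of_pow_lt_pow_left₀ 2 hε.le hv
  · intro h ε hε
    obtain ⟨_, ⟨w, hw, rfl⟩, hlt⟩ := h (√ε) (Real.sqrt_pos.2 hε)
    refine ⟨⟨-w, neg_mem hw⟩, ?_⟩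
    rw [← Real.lt_sqrt (norm_nonneg _), ← hdist, neg_neg]
    exact hlt

theorem orthogonal_map {𝕜 E F : Type*} [RCLike 𝕜] [NormedAddCommGroup E] [NormedAddCommGroup F]
    [InnerProductSpace 𝕜 E] [InnerProductSpace 𝕜 F] [CompleteSpace E] [CompleteSpace F]
    (T : E →L[𝕜] F) (V : Submodule 𝕜 E) :
    (V.map (T : E →ₗ[𝕜] F))ᗮ = Vᗮ.comap (T† : F →ₗ[𝕜] E) := by
  ext y
  simp [Submodule.mem_orthogonal, adjoint_inner_right]

end ContinuousLinearMap

namespace IsSelfAdjoint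

variable {𝕜 E : Type*} [RCLike 𝕜] [NormedAddCommGroup E] [InnerProductSpace 𝕜 E]
  [CompleteSpace E]

theorem eq_zero_iff_forall_re_inner_self {W : E →L[𝕜] E} (hW : IsSelfAdjoint W) :
    W = 0 ↔ ∀ f, RCLike.re ⟪W f, f⟫_𝕜 = 0 := by
  refine ⟨by rintro rfl f; simp, fun h => ?_⟩
  refine coe_injective (hW.isSymmetric.inner_map_self_eq_zero.1 fun f => ?_)
  rw [← hW.isSymmetric.coe_re_inner_apply_self, coe_coe, h, RCLike.ofReal_zero]

theorem range_le_closure_map_orthogonal_iff {R : E →L[𝕜] E} (hR : IsSelfAdjoint R)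
    {K : Submodule 𝕜 E} (hK : IsClosed (K : Set E)) :
    LinearMap.range (R : E →ₗ[𝕜] E) ≤ (Kᗮ.map (R : E →ₗ[𝕜] E)).topologicalClosure ↔
      LinearMap.range (R : E →ₗ[𝕜] E) ⊓ K = ⊥ := by
  have : CompleteSpace K := hK.completeSpace_coe
  rw [← Submodule.orthogonal_orthogonal_eq_closure, ← Submodule.isOrtho_iff_le,
    Submodule.isOrtho_comm, Submodule.isOrtho_iff_le, orthogonal_map,
    Submodule.orthogonal_orthogonal, orthogonal_range, hR.adjoint_eq,
    LinearMap.range_inf_eq_bot_iff_comap_le_ker]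

end IsSelfAdjoint

theorem shorted_eq_zero_iff_general (S R : H →L[ℂ] H)
    (hR : R.IsPositive) (hR2 : R ∘L R = S)
    (K : Submodule ℂ H) (hK : IsClosed (K : Set H))
    (W : H →L[ℂ] H) (hW : IsShortedOp S W K) :
    W = 0 ↔ LinearMap.range (R : H →ₗ[ℂ] H) ⊓ K = ⊥ := by
  obtain ⟨hWsa, hWinf⟩ := hW
  have hform : ∀ f : H, (⟪W f, f⟫_ℂ).re = ⨅ φ : Kᗮ, ‖R (f + φ)‖ ^ 2 := by
    intro f
    rw [hWinf]
    congr! 2 with φ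
    rw [apply_norm_sq_eq_inner_adjoint_left, hR.isSelfAdjoint.adjoint_eq, hR2]
    rfl
  rw [hWsa.eq_zero_iff_forall_re_inner_self,
    ← hR.isSelfAdjoint.range_le_closure_map_orthogonal_iff hK, LinearMap.range_le_iff_comap,
    Submodule.eq_top_iff']
  refine forall_congr' fun f => ?_
  rw [Submodule.mem_comap, coe_coe, ← iInf_norm_sq_apply_add_eq_zero_iff, ← hform]
  rfl

/-- For `S ≥ 0` with positive square root `R = S^{1/2}` and a closed
subspace `K`, the shorted operator `S_K` vanishes iff `ran(S^{1/2}) ∩ K = {0}`. -/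
theorem shorted_eq_zero_iff (S R : H →L[ℂ] H)
    (hS : S.IsPositive) (hR : R.IsPositive) (hR2 : R ∘L R = S)
    (K : Submodule ℂ H) (hK : IsClosed (K : Set H))
    (W : H →L[ℂ] H) (hW : IsShortedOp S W K) :
    W = 0 ↔ LinearMap.range (R : H →ₗ[ℂ] H) ⊓ K = ⊥ :=
  shorted_eq_zero_iff_general S R hR hR2 K hK W hW
end

section
/- Let S be a bounded nonnegative self-adjoint operator on H, P an orthogonal projection on H, and K a closed subspace with K ⊆ ran(P). Then (P S P)_K ≥ S_K in the Loewner order. -/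
open ContinuousLinearMap

variable {H : Type*} [NormedAddCommGroup H] [InnerProductSpace ℂ H] [CompleteSpace H]

/-! Since `P` is symmetric and fixes `K` pointwise, `P - 1` maps into `Kᗮ`. Hence for `φ ∈ Kᗮ`
the vector `ψ := P (f + φ) - f = (P - 1) (f + φ) + φ` lies in `Kᗮ`, and
`⟪P S P (f + φ), f + φ⟫ = ⟪S (f + ψ), f + ψ⟫`: every value in the infimum defining
`(P S P)_K f` also occurs in the infimum defining `S_K f`. -/

section

variable {𝕜 E : Type*} [RCLike 𝕜] [NormedAddCommGroup E] [InnerProductSpace 𝕜 E]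

theorem LinearMap.IsSymmetric.apply_sub_self_mem_orthogonal {P : E →ₗ[𝕜] E}
    (hP : P.IsSymmetric) {K : Submodule 𝕜 E} (hK : ∀ k ∈ K, P k = k) (x : E) :
    P x - x ∈ Kᗮ := by
  rw [Submodule.mem_orthogonal]
  intro k hk
  rw [inner_sub_right, ← hP, hK k hk, sub_self]

theorem ContinuousLinearMap.iInf_re_inner_le_iInf_re_inner_comp {S P : E →L[𝕜] E}
    (hS : S.IsPositive) (hP : (P : E →ₗ[𝕜] E).IsSymmetric) {K : Submodule 𝕜 E}
    (hK : ∀ k ∈ K, P k = k) (f : E) :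
    ⨅ φ : Kᗮ, RCLike.re (inner 𝕜 (S (f + φ)) (f + φ))
      ≤ ⨅ φ : Kᗮ, RCLike.re (inner 𝕜 ((P ∘L S ∘L P) (f + φ)) (f + φ)) := by
  have hbdd : BddBelow (Set.range fun φ : Kᗮ => RCLike.re (inner 𝕜 (S (f + φ)) (f + φ))) :=
    ⟨0, by rintro _ ⟨φ, rfl⟩; exact hS.re_inner_nonneg_left _⟩
  refine ciInf_mono_of_forall_exists hbdd fun φ => ?_
  have hPx : P (f + φ) - (f + φ) ∈ Kᗮ := hP.apply_sub_self_mem_orthogonal hK _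
  have hψ : P (f + φ) - f ∈ Kᗮ := by
    convert Kᗮ.add_mem hPx φ.2 using 1
    abel
  refine ⟨⟨P (f + φ) - f, hψ⟩, le_of_eq ?_⟩
  rw [add_sub_cancel]
  exact congrArg RCLike.re (hP _ _).symm

end

theorem IsShortedOp.isPositive_sub {S₁ S₂ W₁ W₂ : H →L[ℂ] H} {K : Submodule ℂ H}
    (hW₁ : IsShortedOp S₁ W₁ K) (hW₂ : IsShortedOp S₂ W₂ K)
    (h : ∀ f : H, ⨅ φ : Kᗮ, (inner ℂ (S₂ (f + φ)) (f + φ) : ℂ).re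
      ≤ ⨅ φ : Kᗮ, (inner ℂ (S₁ (f + φ)) (f + φ) : ℂ).re) :
    (W₁ - W₂).IsPositive := by
  refine ⟨(hW₁.1.sub hW₂.1).isSymmetric, fun f => ?_⟩
  rw [reApplyInnerSelf_apply, sub_apply, inner_sub_left, map_sub, sub_nonneg]
  simpa only [RCLike.re_to_complex, hW₁.2, hW₂.2] using h f

theorem shorted_compress_ge_general (S : H →L[ℂ] H) (hS : S.IsPositive)
    (P : H →L[ℂ] H) (hPsa : IsSelfAdjoint P) (hPidem : P ∘L P = P)
    (K : Submodule ℂ H)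
    (hKP : (K : Set H) ⊆ Set.range P)
    (W₁ W₂ : H →L[ℂ] H)
    (hW₁ : IsShortedOp (P ∘L S ∘L P) W₁ K) (hW₂ : IsShortedOp S W₂ K) :
    (W₁ - W₂).IsPositive := by
  have hPK : ∀ k ∈ K, P k = k := by
    intro k hk
    obtain ⟨g, rfl⟩ := hKP hk
    rw [← comp_apply, hPidem]
  exact hW₁.isPositive_sub hW₂ (iInf_re_inner_le_iInf_re_inner_comp hS hPsa.isSymmetric hPK)

/-- Let `S ≥ 0`, `P` an orthogonal projection (self-adjoint
idempotent), and `K` a closed subspace with `K ⊆ ran P`. Then `(PSP)_K ≥ S_K`. -/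
theorem shorted_compress_ge (S : H →L[ℂ] H) (hS : S.IsPositive)
    (P : H →L[ℂ] H) (hPsa : IsSelfAdjoint P) (hPidem : P ∘L P = P)
    (K : Submodule ℂ H) (hK : IsClosed (K : Set H))
    (hKP : (K : Set H) ⊆ Set.range P)
    (W₁ W₂ : H →L[ℂ] H)
    (hW₁ : IsShortedOp (P ∘L S ∘L P) W₁ K) (hW₂ : IsShortedOp S W₂ K) :
    (W₁ - W₂).IsPositive :=
  shorted_compress_ge_general S hS P hPsa hPidem K hKP W₁ W₂ hW₁ hW₂
end

section
/- Let X be a nonnegative self-adjoint contraction on H, {X_n} a sequence of nonnegative self-adjoint contractions converging strongly to X, and K a closed subspace such that the sequence of shorted operators {(I - X_n)_K} is non-increasing. Then the strong limit of (I - X_n)_K is ≤ (I - X)_K. -/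
open ContinuousLinearMap

variable {H : Type*} [NormedAddCommGroup H] [InnerProductSpace ℂ H] [CompleteSpace H]

/-
`⟪W f, f⟫` for a shorted operator `W` is an infimum over the fibre `f + Kᗮ` of the quadratic form
of the operator being shorted, and each term of that infimum is continuous under strong
convergence. So for fixed `φ ∈ Kᗮ` the bound `⟪Wₙ f, f⟫ ≤ ⟪(I - Xₙ)(f + φ), f + φ⟫` passes to the
limit, and taking the infimum over `φ` gives `⟪Wlim f, f⟫ ≤ ⟪V f, f⟫`.
-/

open Filter Topology
open scoped InnerProductSpace

section

variable {𝕜 E : Type*} [RCLike 𝕜] [NormedAddCommGroup E] [InnerProductSpace 𝕜 E]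

theorem Filter.Tendsto.re_inner_const {α : Type*} {l : Filter α} {u : α → E} {y : E}
    (h : Tendsto u l (𝓝 y)) (x : E) :
    Tendsto (fun i => RCLike.re ⟪u i, x⟫_𝕜) l (𝓝 (RCLike.re ⟪y, x⟫_𝕜)) :=
  (RCLike.continuous_re.tendsto _).comp (h.inner tendsto_const_nhds)

theorem IsSelfAdjoint.of_tendsto_apply [CompleteSpace E] {α : Type*} {l : Filter α} [l.NeBot]
    {T : α → E →L[𝕜] E} {A : E →L[𝕜] E} (hT : ∀ i, IsSelfAdjoint (T i))
    (hA : ∀ x, Tendsto (fun i => T i x) l (𝓝 (A x))) : IsSelfAdjoint A := by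
  refine LinearMap.IsSymmetric.isSelfAdjoint fun x y => ?_
  have hsymm : ∀ i, ⟪T i x, y⟫_𝕜 = ⟪x, T i y⟫_𝕜 := fun i =>
    isSelfAdjoint_iff_isSymmetric.mp (hT i) x y
  have hleft := (hA x).inner (𝕜 := 𝕜) (tendsto_const_nhds (x := y))
  simp only [hsymm] at hleft
  exact tendsto_nhds_unique hleft ((tendsto_const_nhds (x := x)).inner (hA y))

theorem ContinuousLinearMap.isPositive_sub_of_re_inner_le [CompleteSpace E] {A B : E →L[𝕜] E}
    (hA : IsSelfAdjoint A) (hB : IsSelfAdjoint B)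
    (h : ∀ x, RCLike.re ⟪B x, x⟫_𝕜 ≤ RCLike.re ⟪A x, x⟫_𝕜) :
    (A - B).IsPositive := by
  refine isPositive_def'.mpr ⟨hA.sub hB, fun x => ?_⟩
  simpa only [reApplyInnerSelf_apply, sub_apply, inner_sub_left, map_sub, sub_nonneg] using h x

end

namespace IsShortedOp

variable {S W : H →L[ℂ] H} {K : Submodule ℂ H}

theorem re_inner_le (hW : IsShortedOp S W K) (hS : S.IsPositive) (f : H) (φ : Kᗮ) :
    (inner ℂ (W f) f).re ≤ (inner ℂ (S (f + φ)) (f + φ)).re := by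
  rw [hW.2 f]
  exact ciInf_le ⟨0, Set.forall_mem_range.mpr fun ψ => hS.re_inner_nonneg_left _⟩ φ

theorem le_re_inner (hW : IsShortedOp S W K) {f : H} {c : ℝ}
    (h : ∀ φ : Kᗮ, c ≤ (inner ℂ (S (f + φ)) (f + φ)).re) : c ≤ (inner ℂ (W f) f).re := by
  rw [hW.2 f]
  exact le_ciInf h

end IsShortedOp

theorem shorted_limit_le_general (X : H →L[ℂ] H)
    (Xs : ℕ → (H →L[ℂ] H))
    (hXsc : ∀ n, (1 - Xs n).IsPositive)
    (hconv : ∀ f : H, Filter.Tendsto (fun n => Xs n f) Filter.atTop (nhds (X f)))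
    (K : Submodule ℂ H)
    (W : ℕ → (H →L[ℂ] H)) (hW : ∀ n, IsShortedOp (1 - Xs n) (W n) K)
    (Wlim : H →L[ℂ] H)
    (hWlim : ∀ f : H, Filter.Tendsto (fun n => W n f) Filter.atTop (nhds (Wlim f)))
    (V : H →L[ℂ] H) (hV : IsShortedOp (1 - X) V K) :
    (V - Wlim).IsPositive := by
  have hWlim_sa : IsSelfAdjoint Wlim := .of_tendsto_apply (fun n => (hW n).1) hWlim
  refine isPositive_sub_of_re_inner_le hV.1 hWlim_sa fun f => hV.le_re_inner fun φ => ?_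
  have hcompl : Tendsto (fun n => (1 - Xs n) (f + φ)) atTop (𝓝 ((1 - X) (f + φ))) := by
    simpa only [sub_apply, one_apply] using tendsto_const_nhds.sub (hconv (f + φ))
  exact le_of_tendsto_of_tendsto' ((hWlim f).re_inner_const (𝕜 := ℂ) f)
    (hcompl.re_inner_const (𝕜 := ℂ) _)
    fun n => (hW n).re_inner_le (hXsc n) f φ

/-- Let `X` be a nonnegative self-adjoint contraction, `{Xₙ}` a
sequence of nonnegative self-adjoint contractions converging strongly to `X`, and
`K` a closed subspace such that the sequence `{(I - Xₙ)_K}` is non-increasing.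
Then the strong limit of `(I - Xₙ)_K` is `≤ (I - X)_K`. -/
theorem shorted_limit_le (X : H →L[ℂ] H) (hX : X.IsPositive)
    (hXc : (1 - X).IsPositive)
    (Xs : ℕ → (H →L[ℂ] H)) (hXs : ∀ n, (Xs n).IsPositive)
    (hXsc : ∀ n, (1 - Xs n).IsPositive)
    (hconv : ∀ f : H, Filter.Tendsto (fun n => Xs n f) Filter.atTop (nhds (X f)))
    (K : Submodule ℂ H) (hK : IsClosed (K : Set H))
    (W : ℕ → (H →L[ℂ] H)) (hW : ∀ n, IsShortedOp (1 - Xs n) (W n) K)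
    (hmono : ∀ n, (W n - W (n + 1)).IsPositive)
    (Wlim : H →L[ℂ] H)
    (hWlim : ∀ f : H, Filter.Tendsto (fun n => W n f) Filter.atTop (nhds (Wlim f)))
    (V : H →L[ℂ] H) (hV : IsShortedOp (1 - X) V K) :
    (V - Wlim).IsPositive :=
  shorted_limit_le_general X Xs hXsc hconv K W hW Wlim hWlim V hV
end

section
/- For an arbitrary nonnegative self-adjoint bounded operator B on a Hilbert space and g ∈ H, the limit as x increases to 0 of ⟨(B - xI)^{-1} g, g⟩ equals ‖B^{-1/2} g‖² if g ∈ ran(B^{1/2}), and equals +∞ otherwise. -/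
/-!
Write `v x = (B - x)⁻¹ g` and `h x = re ⟪v x, g⟫`. For `x ≤ 0` the operator `B - x` is positive,
and completing the square in `re ⟪(B - x) (v x - w), v x - w⟫ ≥ 0` gives the variational principle
`h x = max_w (2 re ⟪g, w⟫ - ‖R w‖² + x ‖w‖²)`. Comparing two values `x ≤ x' ≤ 0` in the same way
gives `‖R (v x' - v x)‖² ≤ h x' - h x`; in particular `h` is nondecreasing.

If `g = R u` with `u ⊥ ker R`, then `u` lies in the closure of `range R`, and choosing `R w` close
to `u` in the variational principle bounds `h` from below by almost `‖u‖²`; from above,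
`h x = re ⟪R (v x), u⟫ ≤ ‖R (v x)‖ ‖u‖` together with `‖R (v x)‖² ≤ h x` gives `h x ≤ ‖u‖²`.

If `h` stays bounded, `R (v x)` is Cauchy as `x ↑ 0`, and its limit `y` satisfies `R y = g`
because `R (R (v x)) = g + x v x` and `‖x v x‖² ≤ -x h x`.
-/

open ContinuousLinearMap Filter Topology RCLike
open scoped InnerProductSpace

theorem cauchySeq_of_dist_sq_le_sub {α β : Type*} [PseudoMetricSpace α] [Nonempty β]
    [SemilatticeSup β] {s : β → α} {a : β → ℝ} {L : ℝ} (ha : Tendsto a atTop (𝓝 L))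
    (hs : ∀ n m, n ≤ m → dist (s n) (s m) ^ 2 ≤ a m - a n) : CauchySeq s := by
  have ha_mono : Monotone a := fun n m hnm => by
    nlinarith [hs n m hnm, sq_nonneg (dist (s n) (s m))]
  refine cauchySeq_of_le_tendsto_0' (fun n => √(L - a n)) (fun n m hnm => ?_) ?_
  · refine Real.le_sqrt_of_sq_le ?_
    linarith [hs n m hnm, ha_mono.ge_of_tendsto ha m]
  · simpa using ((ha.const_sub L).sqrt)

namespace ContinuousLinearMap

variable {𝕜 E : Type*} [RCLike 𝕜] [NormedAddCommGroup E] [InnerProductSpace 𝕜 E]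
  {B : E →L[𝕜] E}

theorem re_inner_sub_smul_apply_self (B : E →L[𝕜] E) (x : ℝ) (y : E) :
    re ⟪B y - (x : 𝕜) • y, y⟫_𝕜 = re ⟪B y, y⟫_𝕜 - x * ‖y‖ ^ 2 := by
  rw [inner_sub_left, inner_smul_left, map_sub, conj_ofReal, re_ofReal_mul,
    ← inner_self_eq_norm_sq (𝕜 := 𝕜)]

theorem re_inner_sub_smul_apply_sub_of_eq (hB : (B : E →ₗ[𝕜] E).IsSymmetric) {x : ℝ}
    {v g : E} (hv : B v - (x : 𝕜) • v = g) (w : E) :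
    re ⟪B (v - w) - (x : 𝕜) • (v - w), v - w⟫_𝕜
      = re ⟪v, g⟫_𝕜 - 2 * re ⟪g, w⟫_𝕜 + re ⟪B w - (x : 𝕜) • w, w⟫_𝕜 := by
  have hsymm : ⟪B w - (x : 𝕜) • w, v⟫_𝕜 = ⟪w, g⟫_𝕜 := by
    rw [← hv, inner_sub_left, inner_sub_right, inner_smul_left, inner_smul_right, conj_ofReal,
      ← coe_coe, hB w v, coe_coe]
  have hsplit : B (v - w) - (x : 𝕜) • (v - w) = g - (B w - (x : 𝕜) • w) := by
    rw [← hv, map_sub, smul_sub]; abel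
  rw [hsplit, inner_sub_left, inner_sub_right, inner_sub_right, hsymm]
  simp only [map_sub]
  rw [inner_re_symm g v, inner_re_symm w g]
  ring

theorem IsPositive.le_re_inner_of_sub_smul_eq (hB : B.IsPositive) {x : ℝ} (hx : x ≤ 0)
    {v g : E} (hv : B v - (x : 𝕜) • v = g) (w : E) :
    2 * re ⟪g, w⟫_𝕜 - re ⟪B w, w⟫_𝕜 + x * ‖w‖ ^ 2 ≤ re ⟪v, g⟫_𝕜 := by
  have hform := re_inner_sub_smul_apply_sub_of_eq hB.isSymmetric hv w
  rw [re_inner_sub_smul_apply_self, re_inner_sub_smul_apply_self] at hform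
  nlinarith [hB.re_inner_nonneg_left (v - w), sq_nonneg ‖v - w‖]

theorem re_inner_sub_re_inner_of_sub_smul_eq (hB : (B : E →ₗ[𝕜] E).IsSymmetric) {x x' : ℝ}
    {a b g : E} (ha : B a - (x' : 𝕜) • a = g) (hb : B b - (x : 𝕜) • b = g) :
    re ⟪a, g⟫_𝕜 - re ⟪b, g⟫_𝕜
      = re ⟪B (a - b), a - b⟫_𝕜 - x' * ‖a - b‖ ^ 2 + (x' - x) * ‖b‖ ^ 2 := by
  have hform := re_inner_sub_smul_apply_sub_of_eq hB ha b
  have hb' : re ⟪b, g⟫_𝕜 = re ⟪B b, b⟫_𝕜 - x * ‖b‖ ^ 2 := by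
    rw [← re_inner_sub_smul_apply_self, hb, inner_re_symm]
  rw [re_inner_sub_smul_apply_self, re_inner_sub_smul_apply_self, inner_re_symm g b] at hform
  linarith

theorem IsPositive.re_inner_le_re_inner_of_sub_smul_eq (hB : B.IsPositive) {x x' : ℝ}
    (hxx' : x ≤ x') (hx' : x' ≤ 0) {a b g : E} (ha : B a - (x' : 𝕜) • a = g)
    (hb : B b - (x : 𝕜) • b = g) :
    re ⟪b, g⟫_𝕜 ≤ re ⟪a, g⟫_𝕜 := by
  have hdiff := re_inner_sub_re_inner_of_sub_smul_eq hB.isSymmetric ha hb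
  nlinarith [hB.re_inner_nonneg_left (a - b), sq_nonneg ‖a - b‖, sq_nonneg ‖b‖]

theorem IsPositive.tendsto_smul_of_re_inner_le (hB : B.IsPositive) {v : ℝ → E} {g : E}
    (hv : ∀ x < 0, B (v x) - (x : 𝕜) • v x = g) {C : ℝ} (hC : ∀ x < 0, re ⟪v x, g⟫_𝕜 ≤ C) :
    Tendsto (fun x : ℝ => (x : 𝕜) • v x) (𝓝[<] 0) (𝓝 0) := by
  have hbound : ∀ x : ℝ, x < 0 → ‖(x : 𝕜) • v x‖ ≤ √(-x * C) := fun x hx => by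
    have hform := re_inner_sub_smul_apply_self B x (v x)
    rw [hv x hx, inner_re_symm] at hform
    refine Real.le_sqrt_of_sq_le ?_
    rw [norm_smul, mul_pow, norm_ofReal, sq_abs]
    nlinarith [hB.re_inner_nonneg_left (v x), hC x hx]
  have hlim : Tendsto (fun x : ℝ => √(-x * C)) (𝓝[<] 0) (𝓝 0) :=
    tendsto_nhdsWithin_of_tendsto_nhds ((Continuous.tendsto' (by fun_prop) _ _ (by simp)))
  exact squeeze_zero_norm' (eventually_nhdsWithin_of_forall hbound) hlim

section SquareRoot

variable {R : E →L[𝕜] E} (hR : (R : E →ₗ[𝕜] E).IsSymmetric) (hRB : R ∘L R = B)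
include hR hRB

theorem re_inner_apply_self_eq_norm_sq_of_comp_self_eq (y : E) :
    re ⟪B y, y⟫_𝕜 = ‖R y‖ ^ 2 := by
  rw [← hRB, comp_apply, ← coe_coe, hR, coe_coe, ← inner_self_eq_norm_sq (𝕜 := 𝕜)]

theorem norm_sq_apply_sub_le_of_sub_smul_eq {x x' : ℝ} (hxx' : x ≤ x') (hx' : x' ≤ 0)
    {a b g : E} (ha : B a - (x' : 𝕜) • a = g) (hb : B b - (x : 𝕜) • b = g) :
    ‖R (a - b)‖ ^ 2 ≤ re ⟪a, g⟫_𝕜 - re ⟪b, g⟫_𝕜 := by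
  have hBsymm : (B : E →ₗ[𝕜] E).IsSymmetric := fun y z => by
    subst hRB
    exact (hR _ z).trans (hR y _)
  rw [re_inner_sub_re_inner_of_sub_smul_eq hBsymm ha hb,
    re_inner_apply_self_eq_norm_sq_of_comp_self_eq hR hRB]
  nlinarith [sq_nonneg ‖a - b‖, sq_nonneg ‖b‖]

theorem re_inner_le_norm_sq_of_sub_smul_eq_apply {x : ℝ} (hx : x ≤ 0) {v u : E}
    (hv : B v - (x : 𝕜) • v = R u) :
    re ⟪v, R u⟫_𝕜 ≤ ‖u‖ ^ 2 := by
  have hform : re ⟪v, R u⟫_𝕜 = ‖R v‖ ^ 2 - x * ‖v‖ ^ 2 := by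
    rw [← hv, inner_re_symm, re_inner_sub_smul_apply_self,
      re_inner_apply_self_eq_norm_sq_of_comp_self_eq hR hRB]
  have hcs : re ⟪v, R u⟫_𝕜 ≤ ‖R v‖ * ‖u‖ := by
    rw [← coe_coe, ← hR, coe_coe]
    exact re_inner_le_norm _ _
  nlinarith [sq_nonneg (‖R v‖ - ‖u‖), sq_nonneg ‖v‖]

theorem IsPositive.le_re_inner_of_sub_smul_eq_apply (hB : B.IsPositive) {x : ℝ} (hx : x ≤ 0)
    {v u : E} (hv : B v - (x : 𝕜) • v = R u) (w : E) :
    ‖u‖ ^ 2 - ‖u - R w‖ ^ 2 + x * ‖w‖ ^ 2 ≤ re ⟪v, R u⟫_𝕜 := by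
  have hvar := hB.le_re_inner_of_sub_smul_eq hx hv w
  rw [← coe_coe, hR, coe_coe, re_inner_apply_self_eq_norm_sq_of_comp_self_eq hR hRB] at hvar
  rw [norm_sub_sq (𝕜 := 𝕜)]
  linarith

variable [CompleteSpace E] (hB : B.IsPositive) {v : ℝ → E}
include hB

theorem tendsto_re_inner_of_sub_smul_eq_apply {u : E} (hu : u ∈ (LinearMap.ker (R : E →ₗ[𝕜] E))ᗮ)
    (hv : ∀ x < 0, B (v x) - (x : 𝕜) • v x = R u) :
    Tendsto (fun x => re ⟪v x, R u⟫_𝕜) (𝓝[<] 0) (𝓝 (‖u‖ ^ 2)) := by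
  have hu_closure : u ∈ closure (Set.range R) := by
    rw [orthogonal_ker, hR.clm_adjoint_eq] at hu
    exact hu
  refine tendsto_order.2 ⟨fun c hc => ?_, fun c hc => ?_⟩
  · obtain ⟨_, hw, w, rfl⟩ : ({y | c < ‖u‖ ^ 2 - ‖u - y‖ ^ 2} ∩ Set.range R).Nonempty :=
      mem_closure_iff.1 hu_closure _ (isOpen_lt continuous_const (by fun_prop)) (by simpa)
    have hlim : Tendsto (fun x : ℝ => ‖u‖ ^ 2 - ‖u - R w‖ ^ 2 + x * ‖w‖ ^ 2) (𝓝[<] 0)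
        (𝓝 (‖u‖ ^ 2 - ‖u - R w‖ ^ 2)) :=
      tendsto_nhdsWithin_of_tendsto_nhds ((Continuous.tendsto' (by fun_prop) _ _ (by simp)))
    filter_upwards [hlim.eventually_const_lt hw, self_mem_nhdsWithin] with x hcx hx
    exact hcx.trans_le (hB.le_re_inner_of_sub_smul_eq_apply hR hRB hx.out.le (hv x hx) w)
  · filter_upwards [self_mem_nhdsWithin] with x hx
    exact (re_inner_le_norm_sq_of_sub_smul_eq_apply hR hRB hx.out.le (hv x hx)).trans_lt hc

variable {g : E} (hv : ∀ x < 0, B (v x) - (x : 𝕜) • v x = g)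
include hv

theorem mem_range_of_re_inner_le {C : ℝ} (hC : ∀ x < 0, re ⟪v x, g⟫_𝕜 ≤ C) :
    g ∈ LinearMap.range (R : E →ₗ[𝕜] E) := by
  obtain ⟨xs, hxs_mono, hxs_mem, hxs_lim⟩ := exists_seq_strictMono_tendsto'
    (show (-1 : ℝ) < 0 by norm_num)
  have hxs_neg (n : ℕ) : xs n < 0 := (hxs_mem n).2
  set a : ℕ → ℝ := fun n => re ⟪v (xs n), g⟫_𝕜
  have ha_lim : Tendsto a atTop (𝓝 (⨆ n, a n)) := by
    refine tendsto_atTop_ciSup (fun n m hnm => ?_) ⟨C, ?_⟩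
    · exact hB.re_inner_le_re_inner_of_sub_smul_eq (hxs_mono.monotone hnm) (hxs_neg m).le
        (hv _ (hxs_neg m)) (hv _ (hxs_neg n))
    · rintro _ ⟨n, rfl⟩
      exact hC _ (hxs_neg n)
  have hcauchy : CauchySeq (fun n => R (v (xs n))) := by
    refine cauchySeq_of_dist_sq_le_sub ha_lim fun n m hnm => ?_
    rw [dist_eq_norm', ← map_sub]
    exact norm_sq_apply_sub_le_of_sub_smul_eq hR hRB (hxs_mono.monotone hnm) (hxs_neg m).le
      (hv _ (hxs_neg m)) (hv _ (hxs_neg n))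
  obtain ⟨y, hy⟩ := cauchySeq_tendsto_of_complete hcauchy
  have hxs_within : Tendsto xs atTop (𝓝[<] 0) :=
    tendsto_nhdsWithin_iff.2 ⟨hxs_lim, Eventually.of_forall hxs_neg⟩
  have hRRv : Tendsto (fun n => R (R (v (xs n)))) atTop (𝓝 g) := by
    have hsmul := ((hB.tendsto_smul_of_re_inner_le hv hC).comp hxs_within).const_add g
    rw [add_zero] at hsmul
    refine hsmul.congr fun n => ?_
    rw [Function.comp_apply, ← hv _ (hxs_neg n), sub_add_cancel, ← hRB, comp_apply]
  exact ⟨y, tendsto_nhds_unique ((R.continuous.tendsto y).comp hy) hRRv⟩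

theorem tendsto_re_inner_atTop_of_notMem_range (hg : g ∉ LinearMap.range (R : E →ₗ[𝕜] E)) :
    Tendsto (fun x => re ⟪v x, g⟫_𝕜) (𝓝[<] 0) atTop := by
  refine tendsto_atTop.2 fun M => ?_
  obtain ⟨x₀, hx₀, hM⟩ : ∃ x₀ < 0, M ≤ re ⟪v x₀, g⟫_𝕜 := by
    by_contra! h
    exact hg (mem_range_of_re_inner_le hR hRB hB hv fun x hx => (h x hx).le)
  filter_upwards [Ioo_mem_nhdsLT hx₀] with x hx
  exact hM.trans (hB.re_inner_le_re_inner_of_sub_smul_eq hx.1.le hx.2.le (hv x hx.2) (hv x₀ hx₀))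

end SquareRoot

end ContinuousLinearMap

variable {H : Type*} [NormedAddCommGroup H] [InnerProductSpace ℂ H] [CompleteSpace H]

/-- For a bounded nonnegative self-adjoint operator `B` with positive
square root `R = B^{1/2}` and `g ∈ H`, the limit as `x ↑ 0` of `⟨(B - xI)⁻¹ g, g⟩`
equals `‖B^{-1/2} g‖²` when `g ∈ ran B^{1/2}` (with `B^{-1/2} g = u` the Moore–Penrose
preimage, `R u = g`, `u ⊥ ker R`), and tends to `+∞` otherwise. -/
theorem resolvent_limit_pseudoinverse (B R : H →L[ℂ] H)
    (hB : B.IsPositive) (hR : R.IsPositive) (hR2 : R ∘L R = B) (g : H)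
    (res : ℝ → (H →L[ℂ] H))
    (hres : ∀ x : ℝ, x < 0 →
      (B - x • (1 : H →L[ℂ] H)) ∘L res x = 1 ∧
      res x ∘L (B - x • (1 : H →L[ℂ] H)) = 1) :
    (∀ u : H, R u = g → u ∈ (LinearMap.ker (R : H →ₗ[ℂ] H))ᗮ →
      Filter.Tendsto (fun x : ℝ => (inner ℂ (res x g) g : ℂ).re)
        (nhdsWithin 0 (Set.Iio 0)) (nhds (‖u‖ ^ 2))) ∧
    (g ∉ LinearMap.range (R : H →ₗ[ℂ] H) →
      Filter.Tendsto (fun x : ℝ => (inner ℂ (res x g) g : ℂ).re)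
        (nhdsWithin 0 (Set.Iio 0)) Filter.atTop) := by
  have hv : ∀ x < 0, B (res x g) - (x : ℂ) • res x g = g := fun x hx => by
    simpa using DFunLike.congr_fun (hres x hx).1 g
  refine ⟨fun u hu hu_perp => ?_, tendsto_re_inner_atTop_of_notMem_range hR.isSymmetric hR2 hB hv⟩
  subst hu
  exact tendsto_re_inner_of_sub_smul_eq_apply hR.isSymmetric hR2 hB hu_perp hv
end

section
/- Let C₀,...,C_N be complex numbers such that the scalar lower triangular Toeplitz matrix T_N is a contraction on ℂ^{N+1}. Then det(I - T_N* T_N) = 0 if and only if the shorted operator (I - T_N* T_N)_M = 0, where M = ℂ ⊕ 0 ⊕ ... ⊕ 0 is the first coordinate line. -/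
/-!
Write `A = 1 - Tᴴ T`. The shorted form at `f` is the infimum of `⟨A x, x⟩` over `x` with
`x 0 = f 0`.

If `det A = 0`, some kernel vector `h` has `h 0 = 1`, and then `x = f 0 • h` makes the infimum
zero for every `f`. Such an `h` exists because the kernel is invariant under the backward shift
`S*` on vectors vanishing at `0`: `T` commutes with the forward shift `S`, so for `h 0 = 0`
we get `‖T h‖ = ‖S T S* h‖ ≤ ‖T S* h‖` while `‖S* h‖ = ‖h‖`, i.e. `⟨A S* h, S* h⟩ ≤ ⟨A h, h⟩`.
Shifting a nonzero kernel vector to its first nonzero entry gives the required `h`.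

If `A` is invertible, put `y = A⁻¹ e₀`. For `x 0 = 1`, Cauchy–Schwarz for the form of `A` gives
`1 = |⟨A x, y⟩|² ≤ ⟨A y, y⟩ ⟨A x, x⟩`, so the shorted form at `e₀` is at least `⟨A y, y⟩⁻¹ > 0`.
-/

open Matrix
open scoped ComplexOrder

section Shift

variable {α : Type*} [Zero α] {m : ℕ}

def shiftUp (v : Fin (m + 1) → α) : Fin (m + 1) → α :=
  Fin.snoc (Fin.tail v) 0

def shiftDown (w : Fin (m + 1) → α) : Fin (m + 1) → α :=
  Fin.cons 0 (Fin.init w)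

@[simp]
theorem shiftUp_castSucc (v : Fin (m + 1) → α) (i : Fin m) : shiftUp v i.castSucc = v i.succ := by
  simp [shiftUp, Fin.tail]

@[simp]
theorem shiftUp_last (v : Fin (m + 1) → α) : shiftUp v (Fin.last m) = 0 := by
  simp [shiftUp]

@[simp]
theorem shiftDown_zero (w : Fin (m + 1) → α) : shiftDown w 0 = 0 := by
  simp [shiftDown]

@[simp]
theorem shiftDown_succ (w : Fin (m + 1) → α) (i : Fin m) : shiftDown w i.succ = w i.castSucc := by
  simp [shiftDown, Fin.init]

theorem shiftDown_shiftUp {v : Fin (m + 1) → α} (hv : v 0 = 0) : shiftDown (shiftUp v) = v := by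
  ext i
  cases i using Fin.cases <;> simp [hv]

theorem exists_apply_zero_ne_zero_of_shiftUp_mem {K : Set (Fin (m + 1) → α)}
    (hK : ∀ v ∈ K, v 0 = 0 → shiftUp v ∈ K) {v : Fin (m + 1) → α} (hv : v ∈ K) (hv0 : v ≠ 0) :
    ∃ w ∈ K, w 0 ≠ 0 := by
  by_contra! hzero
  have hvanish : ∀ i, ∀ w ∈ K, w i = 0 := fun i => by
    induction i using Fin.induction with
    | zero => exact hzero
    | succ i ih => exact fun w hw => shiftUp_castSucc w i ▸ ih _ (hK w hw (hzero w hw))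
  exact hv0 (funext fun i => hvanish i v hv)

end Shift

section StarOrdered

variable {R : Type*} [NonUnitalRing R] [PartialOrder R] [StarRing R] [StarOrderedRing R] {m : ℕ}

theorem star_shiftUp_dotProduct_shiftUp_le (v : Fin (m + 1) → R) :
    star (shiftUp v) ⬝ᵥ shiftUp v ≤ star v ⬝ᵥ v := by
  simp only [dotProduct, Pi.star_apply]
  rw [Fin.sum_univ_castSucc, Fin.sum_univ_succ (f := fun i => star (v i) * v i)]
  simp

theorem star_shiftDown_dotProduct_shiftDown_le (w : Fin (m + 1) → R) :
    star (shiftDown w) ⬝ᵥ shiftDown w ≤ star w ⬝ᵥ w := by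
  simp only [dotProduct, Pi.star_apply]
  rw [Fin.sum_univ_succ, Fin.sum_univ_castSucc (f := fun i => star (w i) * w i)]
  simp

end StarOrdered

def lowerToeplitz {R : Type*} [Zero R] (m : ℕ) (C : ℕ → R) : Matrix (Fin m) (Fin m) R :=
  of fun i j => if (j : ℕ) ≤ i then C (i - j) else 0

section Toeplitz

variable {R : Type*} {m : ℕ}

theorem lowerToeplitz_apply_of_lt [Zero R] (C : ℕ → R) {i j : Fin m} (h : i < j) :
    lowerToeplitz m C i j = 0 :=
  if_neg (not_le.mpr h)

theorem lowerToeplitz_succ_succ [Zero R] (C : ℕ → R) (i j : Fin m) :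
    lowerToeplitz (m + 1) C i.succ j.succ = lowerToeplitz (m + 1) C i.castSucc j.castSucc := by
  simp [lowerToeplitz]

theorem lowerToeplitz_mulVec_shiftDown [NonUnitalNonAssocSemiring R] (C : ℕ → R)
    (w : Fin (m + 1) → R) :
    lowerToeplitz (m + 1) C *ᵥ shiftDown w = shiftDown (lowerToeplitz (m + 1) C *ᵥ w) := by
  ext i
  cases i using Fin.cases with
  | zero =>
    simp [mulVec, dotProduct, Fin.sum_univ_succ, lowerToeplitz_apply_of_lt C (Fin.succ_pos _)]
  | succ i =>
    simp only [mulVec, dotProduct, shiftDown_succ]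
    rw [Fin.sum_univ_succ, Fin.sum_univ_castSucc,
      lowerToeplitz_apply_of_lt C (Fin.castSucc_lt_last i)]
    simp [lowerToeplitz_succ_succ]

end Toeplitz

theorem Matrix.star_dotProduct_one_sub_conjTranspose_mul_mulVec {n R : Type*} [Fintype n]
    [DecidableEq n] [CommRing R] [StarRing R] (T : Matrix n n R) (x : n → R) :
    star x ⬝ᵥ (1 - Tᴴ * T) *ᵥ x = star x ⬝ᵥ x - star (T *ᵥ x) ⬝ᵥ T *ᵥ x := by
  rw [sub_mulVec, one_mulVec, ← mulVec_mulVec, dotProduct_sub, dotProduct_mulVec,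
    vecMul_conjTranspose, star_star]

section DefectKernel

variable {𝕜 : Type*} [RCLike 𝕜] {m : ℕ} {C : ℕ → 𝕜}

theorem lowerToeplitz_defect_mulVec_shiftUp_eq_zero
    (hA : (1 - (lowerToeplitz (m + 1) C)ᴴ * lowerToeplitz (m + 1) C).PosSemidef)
    {h : Fin (m + 1) → 𝕜}
    (hh : (1 - (lowerToeplitz (m + 1) C)ᴴ * lowerToeplitz (m + 1) C) *ᵥ h = 0) (h0 : h 0 = 0) :
    (1 - (lowerToeplitz (m + 1) C)ᴴ * lowerToeplitz (m + 1) C) *ᵥ shiftUp h = 0 := by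
  set T := lowerToeplitz (m + 1) C
  rw [← hA.dotProduct_mulVec_zero_iff]
  refine le_antisymm ?_ (hA.dotProduct_mulVec_nonneg _)
  have hTh : T *ᵥ h = shiftDown (T *ᵥ shiftUp h) := by
    rw [← lowerToeplitz_mulVec_shiftDown, shiftDown_shiftUp h0]
  calc star (shiftUp h) ⬝ᵥ (1 - Tᴴ * T) *ᵥ shiftUp h
      = star (shiftUp h) ⬝ᵥ shiftUp h - star (T *ᵥ shiftUp h) ⬝ᵥ T *ᵥ shiftUp h :=
        star_dotProduct_one_sub_conjTranspose_mul_mulVec T _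
    _ ≤ star h ⬝ᵥ h - star (T *ᵥ h) ⬝ᵥ T *ᵥ h := by
        rw [hTh]
        exact sub_le_sub (star_shiftUp_dotProduct_shiftUp_le h)
          (star_shiftDown_dotProduct_shiftDown_le _)
    _ = 0 := by rw [← star_dotProduct_one_sub_conjTranspose_mul_mulVec, hh, dotProduct_zero]

theorem lowerToeplitz_defect_exists_mulVec_eq_zero_apply_zero_eq_one
    (hA : (1 - (lowerToeplitz (m + 1) C)ᴴ * lowerToeplitz (m + 1) C).PosSemidef)
    (hdet : (1 - (lowerToeplitz (m + 1) C)ᴴ * lowerToeplitz (m + 1) C).det = 0) :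
    ∃ h, (1 - (lowerToeplitz (m + 1) C)ᴴ * lowerToeplitz (m + 1) C) *ᵥ h = 0 ∧ h 0 = 1 := by
  obtain ⟨v, hv0, hv⟩ := exists_mulVec_eq_zero_iff.mpr hdet
  obtain ⟨w, hw, hw0⟩ := exists_apply_zero_ne_zero_of_shiftUp_mem
    (K := {h | (1 - (lowerToeplitz (m + 1) C)ᴴ * lowerToeplitz (m + 1) C) *ᵥ h = 0})
    (fun h hh h0 => lowerToeplitz_defect_mulVec_shiftUp_eq_zero hA hh h0) hv hv0
  refine ⟨(w 0)⁻¹ • w, ?_, inv_mul_cancel₀ hw0⟩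
  rw [mulVec_smul, Set.mem_ofPred_eq.mp hw, smul_zero]

end DefectKernel

namespace Matrix

variable {n 𝕜 : Type*} [Fintype n] [RCLike 𝕜] {A : Matrix n n 𝕜}

theorem PosSemidef.norm_dotProduct_mulVec_sq_le (hA : A.PosSemidef) (x y : n → 𝕜) :
    ‖star x ⬝ᵥ A *ᵥ y‖ ^ 2 ≤ RCLike.re (star x ⬝ᵥ A *ᵥ x) * RCLike.re (star y ⬝ᵥ A *ᵥ y) := by
  let _ := A.toSeminormedAddCommGroup hA
  let _ := A.toInnerProductSpace hA
  have hCS := inner_mul_inner_self_le (𝕜 := 𝕜) x y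
  rw [norm_inner_symm y x] at hCS
  rw [sq, dotProduct_comm (star x), dotProduct_comm (star x), dotProduct_comm (star y)]
  exact hCS

theorem PosSemidef.eq_zero_of_re_dotProduct_mulVec_eq_zero (hA : A.PosSemidef)
    (h : ∀ x, RCLike.re (star x ⬝ᵥ A *ᵥ x) = 0) : A = 0 := by
  refine ext_iff_mulVec.mpr fun x => ?_
  rw [zero_mulVec, ← hA.dotProduct_mulVec_zero_iff]
  exact RCLike.ext (by simpa using h x)
    (by simpa using (RCLike.nonneg_iff.mp (hA.dotProduct_mulVec_nonneg x)).2)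

end Matrix

section ShortedForm

variable {n 𝕜 : Type*} [Fintype n] [RCLike 𝕜] {A : Matrix n n 𝕜}

/-- The quadratic form of the Kreĭn shorted operator of `A` with respect to the line spanned by
`Pi.single i₀ 1`. -/
noncomputable def shortedForm (A : Matrix n n 𝕜) (i₀ : n) (f : n → 𝕜) : ℝ :=
  ⨅ φ : {φ : n → 𝕜 // φ i₀ = 0}, RCLike.re (star (f + (φ : n → 𝕜)) ⬝ᵥ A *ᵥ (f + (φ : n → 𝕜)))

instance (i₀ : n) : Nonempty {φ : n → 𝕜 // φ i₀ = 0} :=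
  ⟨⟨0, rfl⟩⟩

theorem shortedForm_eq_zero_of_mulVec_eq_zero (hA : A.PosSemidef) {i₀ : n} {h : n → 𝕜}
    (hh : A *ᵥ h = 0) (h1 : h i₀ = 1) (f : n → 𝕜) : shortedForm A i₀ f = 0 := by
  have hbdd : BddBelow (Set.range fun φ : {φ : n → 𝕜 // φ i₀ = 0} =>
      RCLike.re (star (f + (φ : n → 𝕜)) ⬝ᵥ A *ᵥ (f + (φ : n → 𝕜)))) :=
    ⟨0, Set.forall_mem_range.mpr fun φ => hA.re_dotProduct_nonneg _⟩
  refine le_antisymm ?_ (le_ciInf fun φ => hA.re_dotProduct_nonneg _)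
  have hφ : (f i₀ • h - f) i₀ = 0 := by simp [h1]
  refine (ciInf_le hbdd ⟨f i₀ • h - f, hφ⟩).trans_eq ?_
  simp [mulVec_smul, hh]

theorem Matrix.PosDef.shortedForm_single_pos [DecidableEq n] (hA : A.PosDef) (i₀ : n) :
    0 < shortedForm A i₀ (Pi.single i₀ 1) := by
  set y := A⁻¹ *ᵥ Pi.single i₀ 1
  have hy : A *ᵥ y = Pi.single i₀ 1 := by
    rw [mulVec_mulVec, mul_nonsing_inv _ ((isUnit_iff_isUnit_det _).mp hA.isUnit), one_mulVec]
  have hy0 : y ≠ 0 := fun h0 => by simpa [h0] using congrFun hy i₀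
  have hq : 0 < RCLike.re (star y ⬝ᵥ A *ᵥ y) := hA.re_dotProduct_pos hy0
  refine (inv_pos.mpr hq).trans_le (le_ciInf fun φ => ?_)
  set x := Pi.single i₀ 1 + (φ : n → 𝕜)
  have hyx : star y ⬝ᵥ A *ᵥ x = 1 := by
    rw [dotProduct_mulVec, ← hA.isHermitian.eq, ← star_mulVec, hy]
    simp [x, φ.2]
  have hCS := hA.posSemidef.norm_dotProduct_mulVec_sq_le y x
  rw [hyx, norm_one, one_pow] at hCS
  exact (inv_le_iff_one_le_mul₀' hq).mpr hCS

end ShortedForm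

/-- Let `C₀, …, C_N` be complex numbers such that the scalar lower
triangular Toeplitz matrix `T_N` is a contraction on `ℂ^{N+1}` (equivalently,
`I - T_N* T_N` is positive semidefinite).  Then `det (I - T_N* T_N) = 0` iff the Kreĭn
shorted operator of `I - T_N* T_N` with respect to the first coordinate line
`M = ℂ ⊕ 0 ⊕ ⋯ ⊕ 0` is zero.  The shorted operator `W` is characterized as the
positive semidefinite matrix whose quadratic form is
`⟨W f, f⟩ = inf_{φ, φ 0 = 0} ⟨(I - T_N* T_N)(f + φ), f + φ⟩`. -/
theorem scalar_toeplitz_det_zero_iff_shorted_zero (Nn : ℕ) (C : ℕ → ℂ)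
    (T : Matrix (Fin (Nn + 1)) (Fin (Nn + 1)) ℂ)
    (hT : ∀ i j : Fin (Nn + 1),
      T i j = if (j : ℕ) ≤ (i : ℕ) then C ((i : ℕ) - (j : ℕ)) else 0)
    (hTc : ((1 : Matrix (Fin (Nn + 1)) (Fin (Nn + 1)) ℂ) - Tᴴ * T).PosSemidef)
    (W : Matrix (Fin (Nn + 1)) (Fin (Nn + 1)) ℂ)
    (hWpos : W.PosSemidef)
    (hW : ∀ f : Fin (Nn + 1) → ℂ,
      (star f ⬝ᵥ W.mulVec f).re =
        ⨅ φ : {φ : Fin (Nn + 1) → ℂ // φ 0 = 0},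
          (star (f + (φ : Fin (Nn + 1) → ℂ)) ⬝ᵥ
            ((1 - Tᴴ * T).mulVec (f + (φ : Fin (Nn + 1) → ℂ)))).re) :
    ((1 : Matrix (Fin (Nn + 1)) (Fin (Nn + 1)) ℂ) - Tᴴ * T).det = 0 ↔ W = 0 := by
  obtain rfl : T = lowerToeplitz (Nn + 1) C := Matrix.ext hT
  replace hW : ∀ f, RCLike.re (star f ⬝ᵥ W *ᵥ f) = shortedForm (1 - _) 0 f := hW
  constructor
  · intro hdet
    obtain ⟨h, hker, h0⟩ :=
      lowerToeplitz_defect_exists_mulVec_eq_zero_apply_zero_eq_one hTc hdet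
    exact hWpos.eq_zero_of_re_dotProduct_mulVec_eq_zero fun f =>
      (hW f).trans (shortedForm_eq_zero_of_mulVec_eq_zero hTc hker h0 f)
  · rintro rfl
    by_contra hdet
    have hpos := (hTc.posDef_iff_det_ne_zero.mpr hdet).shortedForm_single_pos 0
    simp [← hW] at hpos
end
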